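/- arXiv:1503.02792 — 4 statements merged into one kernel-verified Lean document; each statement's English description precedes it below -/
import Mathlib

section
/- Let X be a finite set. The function d(p,p') = (nc(p)+nc(p'))/2 − nc(p∨p') is a distance on the set of partitions of X: for all partitions p, p', p'' of X one has d(p,p') ≥ 0, d(p,p') = 0 if and only if p = p', d(p,p') = d(p',p), and d(p,p'') ≤ d(p,p') + d(p',p''). -/
/-!
With `rank p = |X| - nc p`, `d(p, q) = rank (p ⊔ q) - (rank p + rank q) / 2`, so nonnegativity and
definiteness come from `nc` being strictly antitone, and the triangle inequality is the inequality
`nc (p ⊔ q) + nc (q ⊔ r) ≤ nc q + nc (p ⊔ r)`, which is semimodularity of the partition lattice: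
for `s ≤ t`, `nc s - nc (s ⊔ v) ≥ nc t - nc (t ⊔ v)`. This is proved by passing from `s` to `t`
gluing two blocks at a time: each gluing lowers `nc s` by one and `nc (s ⊔ v)` by at most one.
-/

open Sum
open scoped Classical

noncomputable section

namespace PartitionPaper

variable {X : Type*}

/-- The number of blocks of a partition of `X`, encoded as a setoid on `X`. -/
def nc (p : Setoid X) : ℕ := Nat.card (Quotient p)

/-- The geodesic distance `d(p,p') = (nc p + nc p')/2 - nc (p ⊔ p')`. -/
def pdist (p q : Setoid X) : ℚ :=
  ((nc p : ℚ) + (nc q : ℚ)) / 2 - (nc (p ⊔ q) : ℚ)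

/-- Geodesic order with base partition `b` : `p' ≤_b p`. -/
def geoLE (b p' p : Setoid X) : Prop := pdist b p' + pdist p' p = pdist b p

/-- Coarser-compatible order `p' ⊣_b p` : `p'` coarser than `p` and
`nc (p' ⊔ b) = nc (p ⊔ b)`.  (In the setoid lattice, `p ≤ p'` means `p` is finer.) -/
def coarserComp (b p' p : Setoid X) : Prop :=
  p ≤ p' ∧ nc (p' ⊔ b) = nc (p ⊔ b)

/-- Finer-compatible order `p' ⊐_b p` : `p'` finer than `p` and
`nc p' - nc (p' ⊔ b) = nc p - nc (p ⊔ b)`. -/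
def finerComp (b p' p : Setoid X) : Prop :=
  p' ≤ p ∧ (nc p' : ℤ) - (nc (p' ⊔ b) : ℤ) = (nc p : ℤ) - (nc (p ⊔ b) : ℤ)

/-- `p'` is obtained from `p` by gluing two blocks of `p` into one. -/
def IsGluing (p p' : Setoid X) : Prop := p ≤ p' ∧ nc p' + 1 = nc p

/-- The Cayley graph on partitions of `X`: an edge iff one partition is obtained
from the other by gluing two of its blocks into one. -/
def glueGraph (X : Type*) : SimpleGraph (Setoid X) where
  Adj p q := IsGluing p q ∨ IsGluing q p
  symm := ⟨fun _ _ h => h.elim Or.inr Or.inl⟩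
  loopless := by
    constructor
    intro p h
    rcases h with ⟨-, h⟩ | ⟨-, h⟩ <;> omega

/-- The segment `[p₁, p₂]` for the geodesic distance. -/
def seg (p₁ p₂ : Setoid X) : Set (Setoid X) :=
  {p | pdist p₁ p + pdist p p₂ = pdist p₁ p₂}

/-- The defect of `p'` from being on `[b, p]`. -/
def df (b p' p : Setoid X) : ℚ := pdist b p' + pdist p' p - pdist b p

/-- Admissible one-step splits: `p'` is obtained by cutting a (pivotal) block of `p`
into two blocks in such a way that the join with `b` gains one block. -/
def Delta (b p : Setoid X) : Set (Setoid X) :=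
  {p' | p' ≤ p ∧ nc p' = nc p + 1 ∧ nc (p' ⊔ b) = nc (p ⊔ b) + 1}

/-- The admissible splits `Sp_b(p) = ⋃ₘ Δ_b^m(p)`. -/
def Sp (b p : Setoid X) : Set (Setoid X) :=
  {p' | Relation.ReflTransGen (fun u v => v ∈ Delta b u) p p'}

/-- The admissible gluings `Gl_b(p)`: partitions obtained by gluing blocks of `p`
without altering the number of blocks of the join with `b`. -/
def Gl (b p : Setoid X) : Set (Setoid X) :=
  {p' | p ≤ p' ∧ nc (p' ⊔ b) = nc (p ⊔ b)}

/-- `p'` is directly smaller than `p` for the relation `r`. -/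
def DirectlySmaller (r : Setoid X → Setoid X → Prop) (p' p : Setoid X) : Prop :=
  r p' p ∧ p' ≠ p ∧ ¬ ∃ p'', p'' ≠ p ∧ p'' ≠ p' ∧ r p' p'' ∧ r p'' p

/-- The block of the partition `p` corresponding to a class `c`. -/
def blockSet (p : Setoid X) (c : Quotient p) : Set X := {x | Quotient.mk p x = c}

/-- The number of blocks of `q` contained in the block `c` of `p`. -/
def numSubBlocks (q p : Setoid X) (c : Quotient p) : ℕ :=
  Nat.card {d : Quotient q // blockSet q d ⊆ blockSet p c}

/-- The number of blocks of `p` containing exactly `i` blocks of `q`. -/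
def rcount (q p : Setoid X) (i : ℕ) : ℕ :=
  Nat.card {c : Quotient p // numSubBlocks q p c = i}

/-- The Möbius function of the refinement order:
`μ_f(q,p) = (-1)^(nc q - nc p) ∏_i ((i-1)!)^(r_i)` for `q` finer than `p`. -/
def muf (q p : Setoid X) : ℤ :=
  (-1) ^ (nc q - nc p) *
    ∏ i ∈ Finset.range (nc q + 1), ((Nat.factorial (i - 1) : ℤ)) ^ (rcount q p i)

/-- `P_k`: partitions of `{1,…,k} ∪ {1',…,k'}`, the left summand being the
unprimed (top) row and the right summand the primed (bottom) row. -/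
abbrev Pk (k : ℕ) := Setoid (Fin k ⊕ Fin k)

/-- The identity partition `id_k = {{i, i'} : 1 ≤ i ≤ k}`. -/
def idk (k : ℕ) : Pk k := Setoid.ker (Sum.elim id id)

/-- The permutation partition associated with `σ`, with blocks `{i, σ(i)'}`. -/
def permPartition {k : ℕ} (σ : Equiv.Perm (Fin k)) : Pk k :=
  Setoid.ker (Sum.elim id σ.symm)

/-- `S_k`, the set of permutation partitions. -/
def Sk (k : ℕ) : Set (Pk k) := Set.range (permPartition (k := k))

/-- `B_k`, the set of Brauer partitions: all blocks have exactly two elements. -/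
def Bk (k : ℕ) : Set (Pk k) := {p | ∀ x, Nat.card {y | p.r x y} = 2}

/-- Embedding of the top/bottom rows of the upper diagram `q` into the
three-row diagram (top ⊕ (middle ⊕ bottom)). -/
def upMap (k : ℕ) : Fin k ⊕ Fin k → Fin k ⊕ (Fin k ⊕ Fin k) :=
  Sum.elim Sum.inl (fun i => Sum.inr (Sum.inl i))

/-- Embedding of the top/bottom rows of the lower diagram `p` into the
three-row diagram. -/
def downMap (k : ℕ) : Fin k ⊕ Fin k → Fin k ⊕ (Fin k ⊕ Fin k) :=
  Sum.elim (fun i => Sum.inr (Sum.inl i)) (fun i => Sum.inr (Sum.inr i))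

/-- The partition of the three-row diagram obtained by stacking a diagram of `q`
on top of a diagram of `p` (identifying the bottom row of `q` with the top row
of `p`): the equivalence relation generated by the copies of `q` and `p`. -/
def stackSetoid {k : ℕ} (p q : Pk k) : Setoid (Fin k ⊕ (Fin k ⊕ Fin k)) :=
  sInf {s | ∀ x y,
    ((∃ a b, upMap k a = x ∧ upMap k b = y ∧ q.r a b) ∨
     (∃ a b, downMap k a = x ∧ downMap k b = y ∧ p.r a b)) → s.r x y}

/-- The composition `p ∘ q` (a diagram of `q` stacked above a diagram of `p`),
obtained by restricting the stacked partition to the outer rows. -/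
def comp {k : ℕ} (p q : Pk k) : Pk k :=
  Setoid.comap (Sum.elim Sum.inl (fun i => Sum.inr (Sum.inr i))) (stackSetoid p q)

/-- `κ(p,q)`: the number of connected components of the stacked diagram entirely
contained in the middle row. -/
def kappaP {k : ℕ} (p q : Pk k) : ℕ :=
  Nat.card {c : Quotient (stackSetoid p q) //
    ∀ x, Quotient.mk (stackSetoid p q) x = c → ∃ i : Fin k, x = Sum.inr (Sum.inl i)}

/-- The transpose `ᵗp`, exchanging the two rows. -/
def transpose {k : ℕ} (p : Pk k) : Pk k := Setoid.comap Sum.swap p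

/-- The disjoint-union partition on a sum type. -/
def sumSetoid {α β : Type*} (p : Setoid α) (q : Setoid β) : Setoid (α ⊕ β) :=
  Setoid.ker (Sum.map (Quotient.mk p) (Quotient.mk q))

/-- Reindexing of the rows for the tensor product. -/
def reindex (k l : ℕ) :
    Fin (k + l) ⊕ Fin (k + l) → (Fin k ⊕ Fin k) ⊕ (Fin l ⊕ Fin l) :=
  Sum.elim
    (fun j => Sum.elim (fun a => Sum.inl (Sum.inl a)) (fun b => Sum.inr (Sum.inl b))
      (finSumFinEquiv.symm j))
    (fun j => Sum.elim (fun a => Sum.inl (Sum.inr a)) (fun b => Sum.inr (Sum.inr b))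
      (finSumFinEquiv.symm j))

/-- The tensor product `p ⊗ q ∈ P_{k+l}`: a diagram of `p` placed to the left of
a diagram of `q`. -/
def tensor {k l : ℕ} (p : Pk k) (q : Pk l) : Pk (k + l) :=
  Setoid.comap (reindex k l) (sumSetoid p q)

/-- The `≺`-defect `η(p,q)`. -/
def eta {k : ℕ} (p q : Pk k) : ℚ :=
  pdist (idk k) p + pdist (idk k) q - pdist (idk k) (comp p q)
    - ((k : ℚ) + (nc (comp p q) : ℚ) - (nc p : ℚ) - (nc q : ℚ)) / 2 - (kappaP p q : ℚ)

/-- The Kreweras complement of `p'` in `p`: the set of `p''` with `p = p' ∘ p''`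
realizing equality in the `≺`-defect inequality. -/
def Krew {k : ℕ} (p p' : Pk k) : Set (Pk k) :=
  {p'' | comp p' p'' = p ∧ eta p' p'' = 0}

/-- `p' ≺ p` : `p'` is an admissible prefix of `p`. -/
def prec {k : ℕ} (p' p : Pk k) : Prop :=
  ∃ p'', comp p' p'' = p ∧ eta p' p'' = 0

/-- The partition of `{1,…,k}` into the orbits (cycles) of the permutation `σ`. -/
def cycleSetoid {k : ℕ} (σ : Equiv.Perm (Fin k)) : Setoid (Fin k) :=
  ⟨σ.SameCycle,
    ⟨fun x => Equiv.Perm.SameCycle.refl σ x, fun h => h.symm, fun h₁ h₂ => h₁.trans h₂⟩⟩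

/-- A partition of `{1,…,k}` is non-crossing if there are no `a < b < c < d` with
`a, c` in one block and `b, d` in a different block. -/
def NonCrossing {k : ℕ} (π : Setoid (Fin k)) : Prop :=
  ¬ ∃ a b c d : Fin k, a < b ∧ b < c ∧ c < d ∧ π.r a c ∧ π.r b d ∧ ¬ π.r a b

/-- The map sending a permutation partition to the partition of `{1,…,k}` into
the orbits of the corresponding bijection (the blocks of `p ⊔ id_k` restricted
to the top row). -/
def orbitMap {k : ℕ} (p : Pk k) : Setoid (Fin k) :=
  Setoid.comap (Sum.inl : Fin k → Fin k ⊕ Fin k) (p ⊔ idk k)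

/-- The permutation `(1,k+1)(2,k+2)⋯(k,2k)` of `{1,…,2k}`. -/
def tauPerm (k : ℕ) : Equiv.Perm (Fin (k + k)) :=
  (finSumFinEquiv.symm.trans (Equiv.sumComm (Fin k) (Fin k))).trans finSumFinEquiv

/-- The left part of a partition in `P_{k₁+k₂}`. -/
def leftPart {k₁ k₂ : ℕ} (p : Pk (k₁ + k₂)) : Pk k₁ :=
  Setoid.comap (Sum.map (Fin.castAdd k₂) (Fin.castAdd k₂)) p

/-- The right part of a partition in `P_{k₁+k₂}`. -/
def rightPart {k₁ k₂ : ℕ} (p : Pk (k₁ + k₂)) : Pk k₂ :=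
  Setoid.comap (Sum.map (Fin.natAdd k₁) (Fin.natAdd k₁)) p

/-- The `p`-moment `m_p(E_N) = Tr_N(E_N ᵗp)/N^{nc(p ⊔ id_k)}
`= ∑_{p'} (E_N)_{p'} N^{nc(p ⊔ p') - nc(p ⊔ id_k)}`. -/
def momentF {k : ℕ} (E : ℕ → Pk k → ℂ) (p : Pk k) (N : ℕ) : ℂ :=
  ∑ᶠ p' : Pk k, E N p' * (N : ℂ) ^ ((nc (p ⊔ p') : ℤ) - (nc (p ⊔ idk k) : ℤ))

/-- The `p`-cumulant `κ_p(E_N) = N^{nc p - nc (p ⊔ id_k)} (E_N)_p`. -/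
def cumulantF {k : ℕ} (E : ℕ → Pk k → ℂ) (p : Pk k) (N : ℕ) : ℂ :=
  (N : ℂ) ^ ((nc p : ℤ) - (nc (p ⊔ idk k) : ℤ)) * E N p

def glue (s : Setoid X) (x y : X) : Setoid X where
  r a b := s a b ∨ (s a x ∧ s y b) ∨ (s a y ∧ s x b)
  iseqv := by
    have hs : ∀ {a b}, s a b → s b a := s.symm
    have ht : ∀ {a b c}, s a b → s b c → s a c := s.trans
    exact ⟨fun a => Or.inl (s.refl a), by grind, by grind⟩

theorem glue_apply {s : Setoid X} {x y a b : X} :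
    glue s x y a b ↔ s a b ∨ (s a x ∧ s y b) ∨ (s a y ∧ s x b) := Iff.rfl

theorem le_glue (s : Setoid X) (x y : X) : s ≤ glue s x y := fun _ _ h => Or.inl h

theorem glue_le {s t : Setoid X} {x y : X} (hst : s ≤ t) (hxy : t x y) : glue s x y ≤ t := by
  rintro a b (h | ⟨h₁, h₂⟩ | ⟨h₁, h₂⟩)
  · exact hst h
  · exact t.trans (hst h₁) (t.trans hxy (hst h₂))
  · exact t.trans (hst h₁) (t.trans (t.symm hxy) (hst h₂))

theorem glue_mono {s t : Setoid X} (h : s ≤ t) (x y : X) : glue s x y ≤ glue t x y :=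
  glue_le (h.trans (le_glue t x y)) (Or.inr (Or.inl ⟨t.refl x, t.refl y⟩))

theorem pdist_comm (p q : Setoid X) : pdist p q = pdist q p := by
  rw [pdist, pdist, sup_comm, add_comm]

theorem pdist_self (p : Setoid X) : pdist p p = 0 := by
  rw [pdist, sup_idem]
  ring

section

variable [Finite X]

theorem nc_antitone : Antitone (nc : Setoid X → ℕ) := fun _ _ h =>
  Nat.card_le_card_of_surjective _ (Quotient.map_surjective h Function.surjective_id)

theorem eq_of_le_of_nc_le {s t : Setoid X} (h : s ≤ t) (hn : nc s ≤ nc t) : s = t := by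
  have hinj :=
    ((Quotient.map_surjective h Function.surjective_id).bijective_of_nat_card_le hn).injective
  exact le_antisymm h fun a b hab => Quotient.exact (hinj (Quotient.sound hab))

theorem nc_strictAnti : StrictAnti (nc : Setoid X → ℕ) := fun _ _ h =>
  (nc_antitone h.le).lt_of_ne fun hn => h.ne (eq_of_le_of_nc_le h.le hn.ge)

theorem nc_le_nc_glue_add_one (s : Setoid X) (x y : X) :
    nc s ≤ nc (glue s x y) + 1 := by
  -- the classes of `s` other than that of `y` stay distinct in `glue s x y`
  let f : Quotient s → Option (Quotient (glue s x y)) :=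
    Quotient.lift (fun z => if s z y then none else some ⟦z⟧) fun a b hab => by
      have hy : s a y ↔ s b y := ⟨s.trans (s.symm hab), s.trans hab⟩
      simp only [hy, Quotient.sound (le_glue s x y hab)]
  have hf : f.Injective := by
    rintro ⟨a⟩ ⟨b⟩ hab
    change (if s a y then none else some ⟦a⟧) = (if s b y then none else some ⟦b⟧) at hab
    apply Quot.sound
    by_cases ha : s a y <;> by_cases hb : s b y <;> simp only [ha, hb, if_true, if_false,
      reduceCtorEq, Option.some_inj, Quotient.eq, glue_apply] at hab
    · exact s.trans ha (s.symm hb)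
    · rcases hab with h | ⟨-, hyb⟩ | ⟨⟨⟩, -⟩
      exacts [h, absurd (s.symm hyb) hb]
  simpa [nc, Finite.card_option] using Nat.card_le_card_of_injective f hf

theorem nc_add_nc_sup_le_of_le {s t : Setoid X} (h : s ≤ t) (v : Setoid X) :
    nc t + nc (s ⊔ v) ≤ nc s + nc (t ⊔ v) := by
  induction hn : nc s using Nat.strong_induction_on generalizing s with
  | _ n ih =>
  obtain rfl | hst := h.eq_or_lt
  · omega
  obtain ⟨x, y, hxy, hsxy⟩ : ∃ x y, t x y ∧ ¬ s x y := by
    by_contra! hc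
    exact hst.ne (le_antisymm h fun a b => hc a b)
  have hsg : s < glue s x y :=
    (le_glue s x y).lt_of_ne fun he => hsxy (he ▸ Or.inr (Or.inl ⟨s.refl x, s.refl y⟩))
  have hgt := ih _ (hn ▸ nc_strictAnti hsg) (glue_le h hxy) rfl
  have hgv : glue s x y ⊔ v ≤ glue (s ⊔ v) x y :=
    sup_le (glue_mono le_sup_left x y) (le_sup_right.trans (le_glue _ x y))
  have := nc_le_nc_glue_add_one (s ⊔ v) x y
  have := nc_antitone hgv
  have := nc_strictAnti hsg
  omega

theorem nc_sup_add_nc_sup_le (p q r : Setoid X) :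
    nc (p ⊔ q) + nc (q ⊔ r) ≤ nc q + nc (p ⊔ r) := by
  have := nc_add_nc_sup_le_of_le (le_sup_right : q ≤ p ⊔ q) r
  have := nc_antitone (sup_le_sup_right (le_sup_left : p ≤ p ⊔ q) r)
  omega

theorem pdist_nonneg (p q : Setoid X) : 0 ≤ pdist p q := by
  have hp : (nc (p ⊔ q) : ℚ) ≤ nc p := mod_cast nc_antitone le_sup_left
  have hq : (nc (p ⊔ q) : ℚ) ≤ nc q := mod_cast nc_antitone le_sup_right
  rw [pdist]
  linarith

theorem eq_of_pdist_eq_zero {p q : Setoid X} (h : pdist p q = 0) : p = q := by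
  have hp := nc_antitone (le_sup_left : p ≤ p ⊔ q)
  have hq := nc_antitone (le_sup_right : q ≤ p ⊔ q)
  have hsum : nc p + nc q = 2 * nc (p ⊔ q) := by
    rw [pdist, sub_eq_zero, div_eq_iff two_ne_zero] at h
    exact_mod_cast h.trans (mul_comm _ _)
  exact (eq_of_le_of_nc_le le_sup_left (by omega)).trans
    (eq_of_le_of_nc_le le_sup_right (by omega)).symm

theorem pdist_triangle (p q r : Setoid X) : pdist p r ≤ pdist p q + pdist q r := by
  have : (nc (p ⊔ q) : ℚ) + nc (q ⊔ r) ≤ nc q + nc (p ⊔ r) := mod_cast nc_sup_add_nc_sup_le p q r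
  simp only [pdist]
  linarith

end

/-- `d(p,p') = (nc p + nc p')/2 - nc (p ⊔ p')` is a distance on the
set of partitions of a finite set `X`. -/
theorem statement1 {X : Type*} [Finite X] :
    (∀ p p' : Setoid X, 0 ≤ pdist p p') ∧
    (∀ p p' : Setoid X, pdist p p' = 0 ↔ p = p') ∧
    (∀ p p' : Setoid X, pdist p p' = pdist p' p) ∧
    (∀ p p' p'' : Setoid X, pdist p p'' ≤ pdist p p' + pdist p' p'') :=
  ⟨pdist_nonneg, fun _ _ => ⟨eq_of_pdist_eq_zero, fun h => h ▸ pdist_self _⟩, pdist_comm,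
    pdist_triangle⟩

end PartitionPaper
end
end

section
/- Let X be a finite set and b, p, p' partitions of X. Then p' ≤_b p if and only if there exists a partition p'' of X such that p'' ⊣_b p and p' ⊐_b p''; moreover, if such a partition p'' exists then it is unique and equals p∨p'. -/
open Sum
open scoped Classical

noncomputable section

namespace PartitionPaper

variable {X : Type*}

def pairS (x y : X) : Setoid X :=
  ⟨fun a b => a = b ∨ (a = x ∧ b = y) ∨ (a = y ∧ b = x), by
    refine ⟨fun a => Or.inl rfl, ?_, ?_⟩
    · rintro a b (rfl | ⟨rfl, rfl⟩ | ⟨rfl, rfl⟩)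
      exacts [Or.inl rfl, Or.inr (Or.inr ⟨rfl, rfl⟩), Or.inr (Or.inl ⟨rfl, rfl⟩)]
    · rintro a b c h1 h2
      rcases h1 with h1 | ⟨ha, hb⟩ | ⟨ha, hb⟩ <;> rcases h2 with h2 | ⟨hc, hd⟩ | ⟨hc, hd⟩ <;>
        subst_vars <;> tauto⟩

def glueRel (t : Setoid X) (x y : X) : Setoid X :=
  ⟨fun a b => t.r a b ∨ (t.r a x ∧ t.r y b) ∨ (t.r a y ∧ t.r x b), by
    refine ⟨fun a => Or.inl (t.refl a), ?_, ?_⟩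
    · rintro a b (h | ⟨h1, h2⟩ | ⟨h1, h2⟩)
      exacts [Or.inl (t.symm h), Or.inr (Or.inr ⟨t.symm h2, t.symm h1⟩),
        Or.inr (Or.inl ⟨t.symm h2, t.symm h1⟩)]
    · rintro a b c (h | ⟨h1, h2⟩ | ⟨h1, h2⟩) (h' | ⟨h1', h2'⟩ | ⟨h1', h2'⟩)
      · exact Or.inl (t.trans h h')
      · exact Or.inr (Or.inl ⟨t.trans h h1', h2'⟩)
      · exact Or.inr (Or.inr ⟨t.trans h h1', h2'⟩)
      · exact Or.inr (Or.inl ⟨h1, t.trans h2 h'⟩)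
      · exact Or.inl (t.trans h1 (t.trans (t.symm (t.trans h2 h1')) h2'))
      · exact Or.inl (t.trans h1 h2')
      · exact Or.inr (Or.inr ⟨h1, t.trans h2 h'⟩)
      · exact Or.inl (t.trans h1 h2')
      · exact Or.inl (t.trans h1 (t.trans (t.symm (t.trans h2 h1')) h2'))⟩

lemma pairS_le {r : Setoid X} {x y : X} (h : r.r x y) : pairS x y ≤ r := by
  rintro a b (rfl | ⟨rfl, rfl⟩ | ⟨rfl, rfl⟩)
  exacts [r.refl a, h, r.symm h]

lemma sup_pairS (t : Setoid X) (x y : X) : t ⊔ pairS x y = glueRel t x y := by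
  apply le_antisymm
  · refine sup_le (fun a b h => Or.inl h) ?_
    rintro a b (rfl | ⟨rfl, rfl⟩ | ⟨rfl, rfl⟩)
    exacts [Or.inl (t.refl a), Or.inr (Or.inl ⟨t.refl a, t.refl b⟩),
      Or.inr (Or.inr ⟨t.refl a, t.refl b⟩)]
  · rintro a b (h | ⟨h1, h2⟩ | ⟨h1, h2⟩)
    · exact (le_sup_left : t ≤ t ⊔ pairS x y) h
    · exact (t ⊔ pairS x y).trans ((le_sup_left : t ≤ t ⊔ pairS x y) h1)
        ((t ⊔ pairS x y).trans
          ((le_sup_right : pairS x y ≤ t ⊔ pairS x y) (Or.inr (Or.inl ⟨rfl, rfl⟩)))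
          ((le_sup_left : t ≤ t ⊔ pairS x y) h2))
    · exact (t ⊔ pairS x y).trans ((le_sup_left : t ≤ t ⊔ pairS x y) h1)
        ((t ⊔ pairS x y).trans
          ((le_sup_right : pairS x y ≤ t ⊔ pairS x y) (Or.inr (Or.inr ⟨rfl, rfl⟩)))
          ((le_sup_left : t ≤ t ⊔ pairS x y) h2))


lemma lemA [Finite X] {q r : Setoid X} (h : q ≤ r) : nc r ≤ nc q := by
  apply Nat.card_le_card_of_surjective
    (Quotient.map' (id : X → X) (fun a b hab => h hab) : Quotient q → Quotient r)
  intro d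
  induction d using Quotient.inductionOn'
  exact ⟨Quotient.mk'' _, rfl⟩

lemma nc_glue [Finite X] (t : Setoid X) (x y : X) (h : ¬ t.r x y) :
    nc (t ⊔ pairS x y) + 1 = nc t := by
  rw [sup_pairS]
  set e := glueRel t x y with he
  have hle : t ≤ e := fun a b hab => Or.inl hab
  set g : Quotient t → Quotient e := Quotient.map' (id : X → X) (fun a b hab => hle hab) with hg
  have key : ∀ a b : X, g (Quotient.mk'' a) = g (Quotient.mk'' b) ↔ e.r a b := by
    intro a b
    exact Quotient.eq''
  have hbij : Function.Bijective
      (fun c : {c : Quotient t // c ≠ Quotient.mk'' y} => g c.1) := by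
    constructor
    · rintro ⟨c1, hc1⟩ ⟨c2, hc2⟩ hcc
      induction c1 using Quotient.inductionOn' with | h a =>
      induction c2 using Quotient.inductionOn' with | h b =>
      simp only [Subtype.mk.injEq]
      rw [key] at hcc
      rcases hcc with h' | ⟨h1, h2⟩ | ⟨h1, h2⟩
      · exact Quotient.sound' h'
      · exact absurd (Quotient.sound' (t.symm h2) : Quotient.mk'' b = Quotient.mk'' y) hc2
      · exact absurd (Quotient.sound' h1 : Quotient.mk'' a = Quotient.mk'' y) hc1
    · intro d
      induction d using Quotient.inductionOn' with | h a =>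
      by_cases hay : t.r a y
      · refine ⟨⟨Quotient.mk'' x, fun hxy => h (Quotient.exact' hxy)⟩, ?_⟩
        exact Quotient.sound' (Or.inr (Or.inl ⟨t.refl x, t.symm hay⟩))
      · exact ⟨⟨Quotient.mk'' a, fun hxy => hay (Quotient.exact' hxy)⟩, rfl⟩
  have h1 : nc e = Nat.card {c : Quotient t // c ≠ Quotient.mk'' y} :=
    (Nat.card_eq_of_bijective _ hbij).symm
  have h2 : Nat.card {c : Quotient t // c ≠ Quotient.mk'' y} + 1 = nc t := by
    letI := Fintype.ofFinite (Quotient t)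
    have h3 := Fintype.card_subtype_compl (fun c : Quotient t => c = Quotient.mk'' y)
    rw [Fintype.card_subtype_eq] at h3
    have h4 : Nat.card {c : Quotient t // c ≠ Quotient.mk'' y}
        = Fintype.card {x : Quotient t // ¬ x = Quotient.mk'' y} := Nat.card_eq_fintype_card
    have h5 : nc t = Fintype.card (Quotient t) := Nat.card_eq_fintype_card
    have hpos : 0 < Fintype.card (Quotient t) := Fintype.card_pos_iff.mpr ⟨Quotient.mk'' y⟩
    omega
  omega

lemma exists_witness {q r : Setoid X} (h : q ≤ r) (hne : q ≠ r) :
    ∃ x y, r.r x y ∧ ¬ q.r x y := by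
  by_contra hc
  push_neg at hc
  exact hne (le_antisymm h fun x y hxy => hc x y hxy)

lemma lemC [Finite X] {q r : Setoid X} (h : q ≤ r) (hnc : nc q = nc r) : q = r := by
  by_contra hne
  obtain ⟨x, y, hr, hq⟩ := exists_witness h hne
  have h1 := nc_glue q x y hq
  have h2 : q ⊔ pairS x y ≤ r := sup_le h (pairS_le hr)
  have := lemA h2
  omega

lemma lemB [Finite X] (b : Setoid X) :
    ∀ n (q r : Setoid X), nc q ≤ n → q ≤ r → nc r + nc (q ⊔ b) ≤ nc q + nc (r ⊔ b) := by
  intro n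
  induction n with
  | zero =>
    intro q r hq _
    have hx : ∀ x : X, False := by
      intro x
      haveI : Nonempty (Quotient q) := ⟨Quotient.mk'' x⟩
      have := Nat.card_pos (α := Quotient q)
      unfold nc at hq
      omega
    have hqr : q = r := Setoid.ext fun a b => (hx a).elim
    subst hqr
    omega
  | succ n ih =>
    intro q r hq hqr
    by_cases hqr' : q = r
    · subst hqr'; omega
    · obtain ⟨x, y, hr, hq'⟩ := exists_witness hqr hqr'
      have h1 := nc_glue q x y hq'
      have hq1r : q ⊔ pairS x y ≤ r := sup_le hqr (pairS_le hr)
      have hb : (q ⊔ pairS x y) ⊔ b = (q ⊔ b) ⊔ pairS x y := by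
        rw [sup_right_comm]
      have h2 : nc (q ⊔ b) ≤ nc ((q ⊔ pairS x y) ⊔ b) + 1 ∧
          nc ((q ⊔ pairS x y) ⊔ b) ≤ nc (q ⊔ b) := by
        rw [hb]
        by_cases hxy : (q ⊔ b).r x y
        · rw [sup_eq_left.mpr (pairS_le hxy)]; omega
        · have := nc_glue (q ⊔ b) x y hxy; omega
      have h3 := ih (q ⊔ pairS x y) r (by omega) hq1r
      omega


/-- `p' ≤_b p` iff there exists `p''` with `p'' ⊣_b p` and `p' ⊐_b p''`;
moreover such a `p''` is unique and equals `p ⊔ p'`. -/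
theorem statement4 {X : Type*} [Finite X] (b p p' : Setoid X) :
    (geoLE b p' p ↔ ∃ p'' : Setoid X, coarserComp b p'' p ∧ finerComp b p' p'') ∧
    (∀ p'' : Setoid X, coarserComp b p'' p → finerComp b p' p'' → p'' = p ⊔ p') := by
  have hB1 : nc (p ⊔ p') + nc (p' ⊔ b) ≤ nc p' + nc ((p ⊔ p') ⊔ b) :=
    lemB b (nc p') p' (p ⊔ p') le_rfl le_sup_right
  have hA2 : nc ((p ⊔ p') ⊔ b) ≤ nc (p ⊔ b) := lemA (sup_le_sup_right le_sup_left b)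
  have key : ∀ p'' : Setoid X, coarserComp b p'' p → finerComp b p' p'' → p'' = p ⊔ p' := by
    rintro p'' ⟨hle, hnc⟩ ⟨hle', heq⟩
    have h0 : p ⊔ p' ≤ p'' := sup_le hle hle'
    have hA1 : nc (p'' ⊔ b) ≤ nc ((p ⊔ p') ⊔ b) := lemA (sup_le_sup_right h0 b)
    have hA3 : nc p'' ≤ nc (p ⊔ p') := lemA h0
    have hB2 : nc p'' + nc ((p ⊔ p') ⊔ b) ≤ nc (p ⊔ p') + nc (p'' ⊔ b) :=
      lemB b (nc (p ⊔ p')) (p ⊔ p') p'' le_rfl h0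
    exact (lemC h0 (by omega)).symm
  refine ⟨⟨?_, ?_⟩, key⟩
  · intro h
    have hq : (nc p' : ℚ) + (nc (b ⊔ p) : ℚ)
        = (nc (b ⊔ p') : ℚ) + (nc (p' ⊔ p) : ℚ) := by
      unfold geoLE pdist at h
      linarith
    have hstar : nc p' + nc (b ⊔ p) = nc (b ⊔ p') + nc (p' ⊔ p) := by exact_mod_cast hq
    rw [sup_comm b p, sup_comm b p', sup_comm p' p] at hstar
    have h1 : nc ((p ⊔ p') ⊔ b) = nc (p ⊔ b) := by omega
    exact ⟨p ⊔ p', ⟨le_sup_left, h1⟩, le_sup_right, by omega⟩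
  · rintro ⟨p'', hc, hf⟩
    have hpp := key p'' hc hf
    rw [hpp] at hc hf
    obtain ⟨-, h1⟩ := hc
    obtain ⟨-, h2⟩ := hf
    have hstar : nc p' + nc (p ⊔ b) = nc (p' ⊔ b) + nc (p ⊔ p') := by omega
    have hq : (nc p' : ℚ) + (nc (p ⊔ b) : ℚ)
        = (nc (p' ⊔ b) : ℚ) + (nc (p ⊔ p') : ℚ) := by exact_mod_cast hstar
    unfold geoLE pdist
    rw [sup_comm b p, sup_comm b p', sup_comm p' p]
    linarith



end PartitionPaper
end
end

section
/- Let k be a positive integer and σ ∈ S_k a permutation partition. Then [id_k, σ] ∩ B_k = [id_k, σ] ∩ S_k: every Brauer partition lying on a geodesic between id_k and σ is a permutation partition. -/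
open Sum
open scoped Classical

noncomputable section

namespace PartitionPaper

variable {X : Type*}

/-! ### Auxiliary material for Statement 10 -/

section Aux10

/-- Subspace of functions constant on the classes of `s`. -/
def USub (s : Setoid X) : Submodule ℚ (X → ℚ) where
  carrier := {f | ∀ x y, s.r x y → f x = f y}
  add_mem' := fun hf hg x y h => by simp [hf x y h, hg x y h]
  zero_mem' := fun x y _ => rfl
  smul_mem' := fun c f hf x y h => by simp [hf x y h]

lemma mem_USub {s : Setoid X} {f : X → ℚ} :
    f ∈ USub s ↔ ∀ x y, s.r x y → f x = f y := Iff.rfl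

lemma USub_antitone {s t : Setoid X} (h : s ≤ t) : USub t ≤ USub s :=
  fun f hf x y hxy => hf x y (h hxy)

lemma USub_inf (s t : Setoid X) : USub s ⊓ USub t = USub (s ⊔ t) := by
  apply le_antisymm
  · rintro f ⟨hfs, hft⟩ x y hxy
    rw [Setoid.sup_eq_eqvGen] at hxy
    induction hxy with
    | rel x y h => exact h.elim (hfs x y) (hft x y)
    | refl x => rfl
    | symm x y _ ih => exact ih.symm
    | trans x y z _ _ ih1 ih2 => exact ih1.trans ih2
  · exact le_inf (USub_antitone le_sup_left) (USub_antitone le_sup_right)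

lemma finrank_USub [Fintype X] (s : Setoid X) : Module.finrank ℚ (USub s) = nc s := by
  classical
  let L : (Quotient s → ℚ) →ₗ[ℚ] (X → ℚ) :=
    { toFun := fun g => g ∘ Quotient.mk s
      map_add' := fun _ _ => rfl
      map_smul' := fun _ _ => rfl }
  have hinj : Function.Injective L := by
    intro g h hgh
    funext c
    induction c using Quotient.ind with
    | _ x => exact congrFun hgh x
  have hrange : LinearMap.range L = USub s := by
    apply le_antisymm
    · rintro f ⟨g, rfl⟩ x y hxy
      exact congrArg g (Quotient.sound hxy)
    · intro f hf
      exact ⟨Quotient.lift f hf, rfl⟩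
  have : Fintype (Quotient s) := Quotient.fintype s
  rw [← hrange, LinearMap.finrank_range_of_inj hinj, Module.finrank_pi, nc,
    Nat.card_eq_fintype_card]

lemma nc_antitone_s10 [Finite X] {s t : Setoid X} (h : s ≤ t) : nc t ≤ nc s := by
  have : Finite (Quotient s) := Quotient.finite s
  exact Nat.card_le_card_of_surjective
    (Quotient.map' id (fun a b hab => h hab))
    (fun c => Quotient.inductionOn' c (fun x => ⟨Quotient.mk'' x, rfl⟩))

/-- The functional `f ↦ ∑ f(top) - ∑ f(bottom)`. -/
def phiF (k : ℕ) : ((Fin k ⊕ Fin k) → ℚ) →ₗ[ℚ] ℚ where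
  toFun f := (∑ i, f (inl i)) - ∑ i, f (inr i)
  map_add' f g := by simp [Finset.sum_add_distrib]; ring
  map_smul' c f := by simp [Finset.mul_sum, mul_sub]

lemma idk_rel {k : ℕ} (i : Fin k) : (idk k).r (inl i) (inr i) := by
  show Sum.elim id id (inl i) = Sum.elim id id (inr i)
  rfl

lemma perm_rel {k : ℕ} (σ : Equiv.Perm (Fin k)) (i : Fin k) :
    (permPartition σ).r (inl i) (inr (σ i)) := by
  show Sum.elim id σ.symm (inl i) = Sum.elim id (⇑σ.symm) (inr (σ i))
  simp

lemma nc_idk (k : ℕ) : nc (idk k) = k := by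
  have hs : Function.Surjective (Sum.elim (id : Fin k → Fin k) id) := fun a => ⟨inl a, rfl⟩
  rw [nc, idk, Nat.card_congr (Setoid.quotientKerEquivOfSurjective _ hs),
    Nat.card_eq_fintype_card, Fintype.card_fin]

lemma nc_permPartition {k : ℕ} (σ : Equiv.Perm (Fin k)) : nc (permPartition σ) = k := by
  have hs : Function.Surjective (Sum.elim (id : Fin k → Fin k) σ.symm) := fun a => ⟨inl a, rfl⟩
  rw [nc, permPartition, Nat.card_congr (Setoid.quotientKerEquivOfSurjective _ hs),
    Nat.card_eq_fintype_card, Fintype.card_fin]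

/-- The key strict inequality: if `p` has `k` blocks but supports a `p`-invariant
function on which `phiF` does not vanish, then `p` is not on a geodesic from
`id_k` to `σ`. -/
lemma key_lt {k : ℕ} (σ : Equiv.Perm (Fin k)) (p : Pk k) (hp : nc p = k)
    (f : (Fin k ⊕ Fin k) → ℚ) (hfU : f ∈ USub p) (hphi : phiF k f ≠ 0) :
    nc (p ⊔ idk k) + nc (p ⊔ permPartition σ) < k + nc (idk k ⊔ permPartition σ) := by
  classical
  set s := p ⊔ idk k with hs
  set t := p ⊔ permPartition σ with ht
  have hUs : USub s ≤ LinearMap.ker (phiF k) := by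
    intro g hg
    have hconst : ∀ i, g (inl i) = g (inr i) := fun i =>
      hg _ _ ((le_sup_right : idk k ≤ s) (idk_rel i))
    have : phiF k g = 0 := by
      show (∑ i, g (inl i)) - ∑ i, g (inr i) = 0
      simp [hconst]
    exact LinearMap.mem_ker.2 this
  have hUt : USub t ≤ LinearMap.ker (phiF k) := by
    intro g hg
    have hconst : ∀ i, g (inl i) = g (inr (σ i)) := fun i =>
      hg _ _ ((le_sup_right : permPartition σ ≤ t) (perm_rel σ i))
    have : phiF k g = 0 := by
      show (∑ i, g (inl i)) - ∑ i, g (inr i) = 0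
      rw [← Equiv.sum_comp σ (fun i => g (inr i))]
      simp [hconst]
    exact LinearMap.mem_ker.2 this
  have hW : USub s ⊔ USub t ≤ USub p ⊓ LinearMap.ker (phiF k) :=
    sup_le (le_inf (USub_antitone le_sup_left) hUs)
      (le_inf (USub_antitone le_sup_left) hUt)
  have hlt : USub p ⊓ LinearMap.ker (phiF k) < USub p := by
    refine SetLike.lt_iff_le_and_exists.2 ⟨inf_le_left, f, hfU, ?_⟩
    intro hmem
    exact hphi (LinearMap.mem_ker.1 hmem.2)
  have h1 : Module.finrank ℚ ↥(USub s ⊔ USub t) < k := by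
    calc Module.finrank ℚ ↥(USub s ⊔ USub t)
        ≤ Module.finrank ℚ ↥(USub p ⊓ LinearMap.ker (phiF k)) := Submodule.finrank_mono hW
      _ < Module.finrank ℚ ↥(USub p) := Submodule.finrank_lt_finrank_of_lt hlt
      _ = k := by rw [finrank_USub, hp]
  have h2 : nc s + nc t
      = Module.finrank ℚ ↥(USub s ⊔ USub t) + nc (s ⊔ t) := by
    rw [← finrank_USub s, ← finrank_USub t,
      ← Submodule.finrank_sup_add_finrank_inf_eq (USub s) (USub t), USub_inf,
      finrank_USub]
  have h3 : nc (s ⊔ t) ≤ nc (idk k ⊔ permPartition σ) :=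
    nc_antitone_s10 (sup_le_sup (le_sup_right : idk k ≤ s)
      (le_sup_right : permPartition σ ≤ t))
  omega

/-- Every class of a Brauer partition consists of exactly two points. -/
lemma two_elts {k : ℕ} {p : Pk k} (hB : p ∈ Bk k) (x : Fin k ⊕ Fin k) :
    ∃ w, w ≠ x ∧ p.r x w ∧ ∀ y, p.r x y → y = x ∨ y = w := by
  have h2 : ({y | p.r x y}).ncard = 2 := by
    rw [← Nat.card_coe_set_eq]; exact hB x
  obtain ⟨u, v, huv, hset⟩ := Set.ncard_eq_two.1 h2
  have hx : x ∈ ({u, v} : Set (Fin k ⊕ Fin k)) := hset ▸ (p.refl' x : p.r x x)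
  have hmem : ∀ y, p.r x y → y = u ∨ y = v := by
    intro y hy
    have : y ∈ ({u, v} : Set (Fin k ⊕ Fin k)) := hset ▸ hy
    simpa using this
  have hrelmem : ∀ y, y ∈ ({u, v} : Set (Fin k ⊕ Fin k)) → p.r x y := by
    intro y hy
    have : y ∈ {y | p.r x y} := hset ▸ hy
    exact this
  have hx' : x = u ∨ x = v := by simpa using hx
  rcases hx' with rfl | rfl
  · exact ⟨v, Ne.symm huv, hrelmem v (by simp), fun y hy => hmem y hy⟩
  · exact ⟨u, huv, hrelmem u (by simp), fun y hy => (hmem y hy).symm⟩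

/-- A Brauer partition has exactly `k` blocks. -/
lemma nc_of_mem_Bk {k : ℕ} {p : Pk k} (hB : p ∈ Bk k) : nc p = k := by
  classical
  have hfib : ∀ c : Quotient p, Nat.card {x // Quotient.mk p x = c} = 2 := by
    intro c
    obtain ⟨x₀, rfl⟩ := Quotient.exists_rep c
    have he : {x // Quotient.mk p x = Quotient.mk p x₀} ≃ {y // p.r x₀ y} :=
      Equiv.subtypeEquivRight (fun y => by
        constructor
        · intro h; exact Quotient.exact h.symm
        · intro h; exact (Quotient.sound h).symm)
    rw [Nat.card_congr he]
    exact hB x₀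
  have hQ : Fintype (Quotient p) := Quotient.fintype p
  have hcard : Fintype.card (Fin k ⊕ Fin k) = ∑ c : Quotient p,
      Fintype.card {x // Quotient.mk p x = c} := by
    rw [← Fintype.card_sigma]
    exact Fintype.card_congr (Equiv.sigmaFiberEquiv (Quotient.mk p)).symm
  have : (2 : ℕ) * k = 2 * nc p := by
    have h1 : Fintype.card (Fin k ⊕ Fin k) = 2 * k := by simp [two_mul]
    have h2 : ∀ c : Quotient p, Fintype.card {x // Quotient.mk p x = c} = 2 := by
      intro c; rw [← Nat.card_eq_fintype_card]; exact hfib c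
    rw [h1] at hcard
    simp only [h2, Finset.sum_const, smul_eq_mul, Finset.card_univ] at hcard
    rw [hcard, nc, Nat.card_eq_fintype_card, Nat.mul_comm]
  omega

/-- A Brauer partition all of whose top points are related to bottom points is a
permutation partition. -/
lemma brauer_perm {k : ℕ} {p : Pk k} (hB : p ∈ Bk k)
    (hall : ∀ a : Fin k, ∃ b : Fin k, p.r (inl a) (inr b)) : p ∈ Sk k := by
  classical
  choose g hg using hall
  have hclass : ∀ a : Fin k, ∀ y, p.r (inl a) y → y = inl a ∨ y = inr (g a) := by
    intro a y hy
    obtain ⟨w, hwne, hwrel, hwall⟩ := two_elts hB (inl a)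
    have hw : w = inr (g a) := by
      rcases hwall _ (hg a) with h | h
      · exact absurd h (by simp)
      · exact h.symm
    rcases hwall y hy with h | h
    · exact Or.inl h
    · exact Or.inr (h.trans hw)
  have hginj : Function.Injective g := by
    intro a a' h
    by_contra hne
    have h1 : p.r (inl a) (inr (g a')) := h ▸ hg a
    have h2 : p.r (inl a) (inl a') := p.trans' h1 (p.symm' (hg a'))
    rcases hclass a _ h2 with h3 | h3
    · exact hne (by injection h3.symm)
    · exact absurd h3 (by simp)
  have hgbij : Function.Bijective g := Finite.injective_iff_bijective.1 hginj
  refine ⟨Equiv.ofBijective g hgbij, ?_⟩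
  have htau : ∀ a, Equiv.ofBijective g hgbij a = g a := fun a => rfl
  apply Setoid.ext
  intro x y
  constructor
  · -- permPartition rel → p rel
    intro hxy
    have hxy' : Sum.elim id (Equiv.ofBijective g hgbij).symm x
        = Sum.elim id (Equiv.ofBijective g hgbij).symm y := hxy
    cases x with
    | inl a =>
      cases y with
      | inl a' =>
        have : a = a' := by simpa using hxy'
        subst this; exact p.refl _
      | inr c =>
        have : (Equiv.ofBijective g hgbij) a = c := by
          have h := hxy'
          simp only [Sum.elim_inl, Sum.elim_inr, id_eq] at h
          exact (Equiv.eq_symm_apply _).1 h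
        rw [← this, htau]; exact hg a
    | inr c =>
      cases y with
      | inl a' =>
        have : (Equiv.ofBijective g hgbij) a' = c := by
          have h := hxy'
          simp only [Sum.elim_inl, Sum.elim_inr, id_eq] at h
          exact ((Equiv.symm_apply_eq _).1 h).symm
        exact p.symm (by rw [← this, htau]; exact hg a')
      | inr c' =>
        have : c = c' := by
          have h := hxy'
          simp only [Sum.elim_inr] at h
          exact (Equiv.ofBijective g hgbij).symm.injective h
        subst this; exact p.refl _
  · -- p rel → permPartition rel
    intro hxy
    show Sum.elim id (Equiv.ofBijective g hgbij).symm x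
        = Sum.elim id (Equiv.ofBijective g hgbij).symm y
    cases x with
    | inl a =>
      cases y with
      | inl a' =>
        rcases hclass a _ hxy with h | h
        · simp [← (by injection h.symm : a = a')]
        · exact absurd h (by simp)
      | inr c =>
        rcases hclass a _ hxy with h | h
        · exact absurd h (by simp)
        · have : c = g a := by injection h
          subst this
          simp only [Sum.elim_inl, Sum.elim_inr, id_eq]
          exact ((Equiv.symm_apply_eq _).2 rfl).symm ▸ (Equiv.symm_apply_apply _ a).symm
    | inr c =>
      cases y with
      | inl a' =>
        rcases hclass a' _ (p.symm hxy) with h | h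
        · exact absurd h (by simp)
        · have : c = g a' := by injection h
          subst this
          simp only [Sum.elim_inl, Sum.elim_inr, id_eq]
          exact Equiv.symm_apply_apply _ a'
      | inr c' =>
        obtain ⟨a, rfl⟩ := hgbij.2 c
        have h1 : p.r (inl a) (inr c') := p.trans' (hg a) hxy
        rcases hclass a _ h1 with h | h
        · exact absurd h (by simp)
        · have : c' = g a := by injection h
          subst this; rfl

/-- The numeric identity extracted from membership in the segment. -/
lemma seg_nat_eq {k : ℕ} (σ : Equiv.Perm (Fin k)) {p : Pk k} (hnc : nc p = k)
    (hseg : p ∈ seg (idk k) (permPartition σ)) :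
    nc (p ⊔ idk k) + nc (p ⊔ permPartition σ)
      = k + nc (idk k ⊔ permPartition σ) := by
  have h : pdist (idk k) p + pdist p (permPartition σ)
      = pdist (idk k) (permPartition σ) := hseg
  unfold pdist at h
  rw [nc_idk, nc_permPartition, hnc, sup_comm (idk k) p] at h
  have h' : (nc (p ⊔ idk k) : ℚ) + (nc (p ⊔ permPartition σ) : ℚ)
      = (k : ℚ) + (nc (idk k ⊔ permPartition σ) : ℚ) := by linarith
  exact_mod_cast h'

end Aux10

/-- For a permutation partition `σ`,
`[id_k, σ] ∩ B_k = [id_k, σ] ∩ S_k`: every Brauer partition on a geodesic from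
`id_k` to `σ` is a permutation partition. -/
theorem statement10 (k : ℕ) (hk : 0 < k) (σ : Equiv.Perm (Fin k)) :
    seg (idk k) (permPartition σ) ∩ Bk k = seg (idk k) (permPartition σ) ∩ Sk k := by
  classical
  ext p
  simp only [Set.mem_inter_iff]
  refine and_congr_right fun hseg => ?_
  constructor
  · intro hB
    by_cases hall : ∀ a : Fin k, ∃ b : Fin k, p.r (inl a) (inr b)
    · exact brauer_perm hB hall
    · exfalso
      push_neg at hall
      obtain ⟨a, ha⟩ := hall
      obtain ⟨w, hwne, hwrel, hwall⟩ := two_elts hB (inl a)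
      cases w with
      | inr b => exact ha b hwrel
      | inl b =>
        have hba : ¬ (b = a) := fun h => hwne (by rw [h])
        set f : (Fin k ⊕ Fin k) → ℚ := fun y => if p.r (inl a) y then 1 else 0 with hf
        have hfU : f ∈ USub p := by
          intro x y hxy
          have hiff : p.r (inl a) x ↔ p.r (inl a) y :=
            ⟨fun h => p.trans' h hxy, fun h => p.trans' h (p.symm' hxy)⟩
          simp only [hf, hiff]
        have hphi : phiF k f ≠ 0 := by
          have h1 : ∀ i, f (inr i) = 0 := fun i => if_neg (ha i)
          have h2 : ∀ i : Fin k, f (inl i) = if i = a ∨ i = b then 1 else 0 := by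
            intro i
            by_cases hc : i = a ∨ i = b
            · have hrel : p.r (inl a) (inl i) := by
                rcases hc with rfl | rfl
                · exact p.refl' _
                · exact hwrel
              simp only [hf]
              rw [if_pos hrel, if_pos hc]
            · have hrel : ¬ p.r (inl a) (inl i) := by
                intro hrel
                rcases hwall _ hrel with h | h
                · exact hc (Or.inl (by injection h))
                · exact hc (Or.inr (by injection h))
              simp only [hf]
              rw [if_neg hrel, if_neg hc]
          have hval : phiF k f = 2 := by
            show (∑ i, f (inl i)) - ∑ i, f (inr i) = 2
            rw [Finset.sum_congr rfl (fun i _ => h2 i),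
              Finset.sum_congr rfl (fun i _ => h1 i)]
            have hsplit : ∀ i : Fin k, (if i = a ∨ i = b then (1 : ℚ) else 0)
                = (if i = a then 1 else 0) + (if i = b then 1 else 0) := by
              intro i
              by_cases hia : i = a
              · subst hia
                have hib : ¬ i = b := fun h => hba h.symm
                simp [hib]
              · by_cases hib : i = b <;> simp [hia, hib, hba]
            rw [Finset.sum_congr rfl (fun i _ => hsplit i)]
            rw [Finset.sum_add_distrib]
            norm_num [Finset.sum_ite_eq']
          rw [hval]; norm_num
        have hlt := key_lt σ p (nc_of_mem_Bk hB) f hfU hphi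
        have heq := seg_nat_eq σ (nc_of_mem_Bk hB) hseg
        omega
  · intro hS
    obtain ⟨τ, rfl⟩ := hS
    intro x
    cases x with
    | inl a =>
      have hset : {y | (permPartition τ).r (inl a) y}
          = ({inl a, inr (τ a)} : Set (Fin k ⊕ Fin k)) := by
        ext y
        simp only [Set.mem_setOf_eq, Set.mem_insert_iff, Set.mem_singleton_iff]
        constructor
        · intro hy
          have hy' : Sum.elim id (⇑τ.symm) (inl a) = Sum.elim id (⇑τ.symm) y := hy
          cases y with
          | inl c =>
            left
            have : a = c := by simpa using hy'
            rw [this]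
          | inr c =>
            right
            have : a = τ.symm c := by simpa using hy'
            rw [(Equiv.eq_symm_apply τ).1 this]
        · intro hy
          rcases hy with rfl | rfl
          · exact (permPartition τ).refl' _
          · show Sum.elim id (⇑τ.symm) (inl a) = Sum.elim id (⇑τ.symm) (inr (τ a))
            simp
      show Nat.card {y | (permPartition τ).r (inl a) y} = 2
      rw [hset, Nat.card_coe_set_eq, Set.ncard_pair (by simp)]
    | inr a =>
      have hset : {y | (permPartition τ).r (inr a) y}
          = ({inl (τ.symm a), inr a} : Set (Fin k ⊕ Fin k)) := by
        ext y
        simp only [Set.mem_setOf_eq, Set.mem_insert_iff, Set.mem_singleton_iff]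
        constructor
        · intro hy
          have hy' : Sum.elim id (⇑τ.symm) (inr a) = Sum.elim id (⇑τ.symm) y := hy
          cases y with
          | inl c =>
            left
            have : τ.symm a = c := by simpa using hy'
            rw [this]
          | inr c =>
            right
            have : τ.symm a = τ.symm c := by simpa using hy'
            rw [τ.symm.injective this]
        · intro hy
          rcases hy with rfl | rfl
          · show Sum.elim id (⇑τ.symm) (inr a) = Sum.elim id (⇑τ.symm) (inl (τ.symm a))
            simp
          · exact (permPartition τ).refl' _
      show Nat.card {y | (permPartition τ).r (inr a) y} = 2
      rw [hset, Nat.card_coe_set_eq, Set.ncard_pair (by simp)]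

end PartitionPaper
end
end

section
/- Let k be a positive integer and p, p' ∈ P_k. If the composition p∘p' is a permutation partition (p∘p' ∈ S_k), then both p and p' are permutation partitions. -/
open Sum
open scoped Classical

noncomputable section

namespace PartitionPaper

variable {X : Type*}

lemma mem_Sk_iff {k : ℕ} (r : Setoid (Fin k ⊕ Fin k)) :
    r ∈ Sk k ↔ (∀ i j : Fin k, r.r (inl i) (inl j) → i = j) ∧
      (∀ i j : Fin k, r.r (inr i) (inr j) → i = j) ∧
      (∀ i : Fin k, ∃ j, r.r (inl i) (inr j)) ∧
      (∀ j : Fin k, ∃ i, r.r (inl i) (inr j)) := by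
  constructor
  · rintro ⟨σ, rfl⟩
    refine ⟨?_, ?_, ?_, ?_⟩
    · intro i j h; exact h
    · intro i j h; exact σ.symm.injective h
    · intro i; exact ⟨σ i, show (i : Fin k) = σ.symm (σ i) by simp⟩
    · intro j; exact ⟨σ.symm j, rfl⟩
  · rintro ⟨h1, h2, h3, h4⟩
    choose f hf using h3
    have finj : Function.Injective f := by
      intro i i' he
      exact h1 i i' (r.trans' (hf i) (r.symm' (he ▸ hf i')))
    refine ⟨Equiv.ofBijective f (Finite.injective_iff_bijective.mp finj), ?_⟩
    apply Setoid.ext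
    intro a b
    set τ := Equiv.ofBijective f (Finite.injective_iff_bijective.mp finj) with hτ
    have hτa : ∀ i, τ i = f i := fun i => rfl
    constructor
    · intro hab
      cases a with
      | inl i =>
        cases b with
        | inl j =>
          have : i = j := hab
          subst this; exact r.refl' _
        | inr j =>
          have hij : (i : Fin k) = τ.symm j := hab
          have : j = f i := by first | rw [← hτa, hij, τ.apply_symm_apply] | rw [← hτa, ← hij, τ.apply_symm_apply]
          exact this ▸ hf i
      | inr i =>
        cases b with
        | inl j =>
          have hij : τ.symm i = (j : Fin k) := hab
          have : i = f j := by first | rw [← hτa, hij, τ.apply_symm_apply] | rw [← hτa, ← hij, τ.apply_symm_apply]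
          exact r.symm' (this ▸ hf j)
        | inr j =>
          have : i = j := τ.symm.injective hab
          subst this; exact r.refl' _
    · intro hab
      cases a with
      | inl i =>
        cases b with
        | inl j => exact congrArg (inl : Fin k → Fin k ⊕ Fin k) (h1 i j hab) ▸ rfl
        | inr j =>
          have hj : j = f i := h2 j (f i) (r.trans' (r.symm' hab) (hf i))
          show (i : Fin k) = τ.symm j
          rw [hj, ← hτa, Equiv.symm_apply_apply]
      | inr i =>
        cases b with
        | inl j =>
          have hi : i = f j := h2 i (f j) (r.trans' hab (hf j))
          show τ.symm i = (j : Fin k)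
          rw [hi, ← hτa, Equiv.symm_apply_apply]
        | inr j => exact congrArg (inr : Fin k → Fin k ⊕ Fin k) (h2 i j hab) ▸ rfl

/-- If the composition `p ∘ p'` is a permutation partition, then both
`p` and `p'` are permutation partitions. -/
theorem statement12 (k : ℕ) (hk : 0 < k) (p p' : Pk k) (h : comp p p' ∈ Sk k) :
    p ∈ Sk k ∧ p' ∈ Sk k := by
  obtain ⟨σ, hσ⟩ := h
  set S := stackSetoid p p' with hSdef
  -- generators are contained in S
  have hub : ∀ a b : Fin k ⊕ Fin k, p'.r a b → S.r (upMap k a) (upMap k b) := by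
    intro a b hab s hs
    exact hs _ _ (Or.inl ⟨a, b, rfl, rfl, hab⟩)
  have hdb : ∀ a b : Fin k ⊕ Fin k, p.r a b → S.r (downMap k a) (downMap k b) := by
    intro a b hab s hs
    exact hs _ _ (Or.inr ⟨a, b, rfl, rfl, hab⟩)
  -- S is the finest setoid containing the generators
  have hle : ∀ s : Setoid (Fin k ⊕ (Fin k ⊕ Fin k)),
      (∀ x y, ((∃ a b, upMap k a = x ∧ upMap k b = y ∧ p'.r a b) ∨
         (∃ a b, downMap k a = x ∧ downMap k b = y ∧ p.r a b)) → s.r x y) →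
      ∀ x y, S.r x y → s.r x y := by
    intro s hs x y hxy
    exact hxy s hs
  -- translation of the hypothesis
  have key : ∀ x y : Fin k ⊕ Fin k,
      (Sum.elim id σ.symm x = Sum.elim id σ.symm y) ↔
        S.r (Sum.elim Sum.inl (fun i => Sum.inr (Sum.inr i)) x)
          (Sum.elim Sum.inl (fun i => Sum.inr (Sum.inr i)) y) :=
    fun x y => Setoid.ext_iff.mp hσ x y
  have htopinj : ∀ i j : Fin k, S.r (Sum.inl i) (Sum.inl j) → i = j :=
    fun i j hh => (key (inl i) (inl j)).mpr hh
  have hbotinj : ∀ i j : Fin k,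
      S.r (Sum.inr (Sum.inr i)) (Sum.inr (Sum.inr j)) → i = j :=
    fun i j hh => σ.symm.injective ((key (inr i) (inr j)).mpr hh)
  have htopbot : ∀ i : Fin k, S.r (Sum.inl i) (Sum.inr (Sum.inr (σ i))) :=
    fun i => (key (inl i) (inr (σ i))).mp (by simp)
  have hbottop : ∀ b : Fin k, S.r (Sum.inl (σ.symm b)) (Sum.inr (Sum.inr b)) := by
    intro b
    have := htopbot (σ.symm b)
    rwa [Equiv.apply_symm_apply] at this
  have htopinj' : ∀ i j : Fin k, p'.r (inl i) (inl j) → i = j :=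
    fun i j hh => htopinj i j (hub _ _ hh)
  have hbotinj' : ∀ i j : Fin k, p.r (inr i) (inr j) → i = j :=
    fun i j hh => hbotinj i j (hdb _ _ hh)
  -- every top point has a middle neighbour in p'
  have hptm : ∀ i : Fin k, ∃ m, p'.r (inl i) (inr m) := by
    intro i
    by_contra hno
    push_neg at hno
    have hgen : ∀ x y, ((∃ a b, upMap k a = x ∧ upMap k b = y ∧ p'.r a b) ∨
        (∃ a b, downMap k a = x ∧ downMap k b = y ∧ p.r a b)) →
        (Setoid.ker (fun x : Fin k ⊕ (Fin k ⊕ Fin k) => x = Sum.inl i)).r x y := by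
      rintro x y (⟨a, b, rfl, rfl, hab⟩ | ⟨a, b, rfl, rfl, hab⟩)
      · cases a with
        | inl a' =>
          cases b with
          | inl b' =>
            have : a' = b' := htopinj' _ _ hab
            subst this; rfl
          | inr m =>
            show (upMap k (inl a') = Sum.inl i) = (upMap k (inr m) = Sum.inl i)
            apply propext
            constructor
            · intro hx
              have : a' = i := by simpa [upMap] using hx
              subst this
              exact absurd hab (hno m)
            · intro hy
              exact absurd hy (by simp [upMap])
        | inr m =>
          cases b with
          | inl b' =>
            show (upMap k (inr m) = Sum.inl i) = (upMap k (inl b') = Sum.inl i)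
            apply propext
            constructor
            · intro hx; exact absurd hx (by simp [upMap])
            · intro hy
              have : b' = i := by simpa [upMap] using hy
              subst this
              exact absurd (p'.symm' hab) (hno m)
          | inr m' =>
            exact propext (iff_of_false (by simp [upMap]) (by simp [upMap]))
      · exact propext (iff_of_false (by cases a <;> simp [downMap])
          (by cases b <;> simp [downMap]))
    have hkr := hle _ hgen _ _ (htopbot i)
    have : (Sum.inr (Sum.inr (σ i)) : Fin k ⊕ (Fin k ⊕ Fin k)) = Sum.inl i :=
      Eq.mp hkr rfl
    simp at this
  -- every bottom point has a middle neighbour in p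
  have hpmb : ∀ b : Fin k, ∃ m, p.r (inl m) (inr b) := by
    intro b
    by_contra hno
    push_neg at hno
    have hgen : ∀ x y, ((∃ a b', upMap k a = x ∧ upMap k b' = y ∧ p'.r a b') ∨
        (∃ a b', downMap k a = x ∧ downMap k b' = y ∧ p.r a b')) →
        (Setoid.ker (fun x : Fin k ⊕ (Fin k ⊕ Fin k) => x = Sum.inr (Sum.inr b))).r x y := by
      rintro x y (⟨a, c, rfl, rfl, hab⟩ | ⟨a, c, rfl, rfl, hab⟩)
      · exact propext (iff_of_false (by cases a <;> simp [upMap])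
          (by cases c <;> simp [upMap]))
      · cases a with
        | inl m =>
          cases c with
          | inl m' =>
            exact propext (iff_of_false (by simp [downMap]) (by simp [downMap]))
          | inr b' =>
            show (downMap k (inl m) = Sum.inr (Sum.inr b)) =
              (downMap k (inr b') = Sum.inr (Sum.inr b))
            apply propext
            constructor
            · intro hx; exact absurd hx (by simp [downMap])
            · intro hy
              have : b' = b := by simpa [downMap] using hy
              subst this
              exact absurd hab (hno m)
        | inr b' =>
          cases c with
          | inl m =>
            show (downMap k (inr b') = Sum.inr (Sum.inr b)) =
              (downMap k (inl m) = Sum.inr (Sum.inr b))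
            apply propext
            constructor
            · intro hx
              have : b' = b := by simpa [downMap] using hx
              subst this
              exact absurd (p.symm' hab) (hno m)
            · intro hy; exact absurd hy (by simp [downMap])
          | inr b'' =>
            have : b' = b'' := hbotinj' _ _ hab
            subst this; rfl
    have hkr := hle _ hgen _ _ (hbottop b)
    have : (Sum.inl (σ.symm b) : Fin k ⊕ (Fin k ⊕ Fin k)) = Sum.inr (Sum.inr b) :=
      Eq.mpr hkr rfl
    simp at this
  choose F hF using hptm
  choose G hG using hpmb
  -- S-relations induced by the choices
  have hSF : ∀ i : Fin k, S.r (Sum.inl i) (Sum.inr (Sum.inl (F i))) :=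
    fun i => hub _ _ (hF i)
  have hSG : ∀ b : Fin k, S.r (Sum.inr (Sum.inl (G b))) (Sum.inr (Sum.inr b)) :=
    fun b => hdb _ _ (hG b)
  have Finj : Function.Injective F := by
    intro i i' he
    refine htopinj i i' (S.trans' (hSF i) (S.symm' ?_))
    rw [he]; exact hSF i'
  have Fsurj : Function.Surjective F := Finite.injective_iff_surjective.mp Finj
  have Ginj : Function.Injective G := by
    intro b b' he
    refine hbotinj b b' (S.trans' (S.symm' (hSG b)) ?_)
    rw [he]; exact hSG b'
  have Gsurj : Function.Surjective G := Finite.injective_iff_surjective.mp Ginj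
  constructor
  · refine (mem_Sk_iff p).mpr ⟨?_, hbotinj', ?_, fun b => ⟨G b, hG b⟩⟩
    · intro m m' hmm'
      obtain ⟨b, rfl⟩ := Gsurj m
      obtain ⟨b', rfl⟩ := Gsurj m'
      have hmid : S.r (Sum.inr (Sum.inl (G b))) (Sum.inr (Sum.inl (G b'))) :=
        hdb (inl (G b)) (inl (G b')) hmm'
      have : b = b' :=
        hbotinj b b' (S.trans' (S.symm' (hSG b)) (S.trans' hmid (hSG b')))
      rw [this]
    · intro m
      obtain ⟨b, rfl⟩ := Gsurj m
      exact ⟨b, hG b⟩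
  · refine (mem_Sk_iff p').mpr ⟨htopinj', ?_, fun i => ⟨F i, hF i⟩, ?_⟩
    · intro m m' hmm'
      obtain ⟨i, rfl⟩ := Fsurj m
      obtain ⟨i', rfl⟩ := Fsurj m'
      have hmid : S.r (Sum.inr (Sum.inl (F i))) (Sum.inr (Sum.inl (F i'))) :=
        hub (inr (F i)) (inr (F i')) hmm'
      have : i = i' :=
        htopinj i i' (S.trans' (hSF i) (S.trans' hmid (S.symm' (hSF i'))))
      rw [this]
    · intro m
      obtain ⟨i, rfl⟩ := Fsurj m
      exact ⟨i, hF i⟩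

end PartitionPaper
end
end
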